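/- There exists an absolute constant c > 0 such that for every finite abelian group G with |G| ≥ 2, the expected number of distinct sums along a uniformly random Hamiltonian cycle, namely srnd(G) = (1/(|G|−1)!) · Σ_C |S(C)| where C ranges over all Hamiltonian cycles on G, satisfies |srnd(G) − (1 − e⁻¹)·|G|| ≤ c. -/

import Mathlib

/-- A Hamiltonian cycle on a finite type `G` is a permutation of `G` which is a single
cycle whose support is all of `G`. -/
def IsHamCycle {G : Type*} [Fintype G] [DecidableEq G] (σ : Equiv.Perm G) : Prop :=
  σ.IsCycle ∧ σ.support = Finset.univ

/-- The set `D(C)` of differences of consecutive elements along the Hamiltonian cycle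
given by the permutation `σ`. -/
def cycleDiffs {G : Type*} [AddCommGroup G] [Fintype G] [DecidableEq G]
    (σ : Equiv.Perm G) : Finset G :=
  Finset.image (fun g => σ g - g) Finset.univ

/-- The set `S(C)` of sums of consecutive elements along the Hamiltonian cycle
given by the permutation `σ`. -/
def cycleSums {G : Type*} [AddCommGroup G] [Fintype G] [DecidableEq G]
    (σ : Equiv.Perm G) : Finset G :=
  Finset.image (fun g => g + σ g) Finset.univ

/-- The rank of an additive abelian group: the minimal cardinality of a generating set. -/
noncomputable def addRank (G : Type*) [AddCommGroup G] : ℕ :=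
  sInf {n : ℕ | ∃ S : Finset G, S.card = n ∧ AddSubgroup.closure (S : Set G) = ⊤}

/-- The addition Cayley graph `Cay⁺(G,S)`: distinct vertices `g, h` are adjacent
iff `g + h ∈ S`. -/
def addCayley (G : Type*) [AddCommGroup G] (S : Set G) : SimpleGraph G where
  Adj g h := g ≠ h ∧ g + h ∈ S
  symm := by
    constructor
    intro g h hgh
    exact ⟨hgh.1.symm, by rw [add_comm]; exact hgh.2⟩
  loopless := by
    constructor
    intro g hg
    exact hg.1 rfl

/-- The subgroup `2G = {g + g : g ∈ G}` of `G`. -/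
def twoSubgroup (G : Type*) [AddCommGroup G] : AddSubgroup G :=
  (AddMonoidHom.id G + AddMonoidHom.id G).range


namespace Stmt19Aux

open Equiv Equiv.Perm Finset

open scoped Classical

set_option linter.unusedSectionVars false
set_option maxHeartbeats 1600000

section NoGroup
variable {G : Type*} [Fintype G] [DecidableEq G]

lemma pow_inj_of_cycle {σ : Perm G} (hc : σ.IsCycle) {b : G} (hb : σ b ≠ b)
    {i j : ℕ} (hi : i < orderOf σ) (hj : j < orderOf σ) (h : (σ ^ i) b = (σ ^ j) b) : i = j := by
  wlog hij : i ≤ j generalizing i j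
  · exact (this hj hi h.symm (le_of_not_ge hij)).symm
  have key : (σ ^ (j - i)) ((σ ^ i) b) = (σ ^ i) b := by
    rw [← Equiv.Perm.mul_apply, ← pow_add, Nat.sub_add_cancel hij, ← h]
  have hx : σ ((σ ^ i) b) ≠ (σ ^ i) b := by
    intro hfix
    have hcomm : σ * σ ^ i = σ ^ i * σ := (Commute.self_pow σ i).eq
    have : (σ ^ i) (σ b) = (σ ^ i) b := by
      have := congrArg (fun τ : Perm G => τ b) hcomm
      simp only [Equiv.Perm.mul_apply] at this
      rw [← this, hfix]
    exact hb ((σ ^ i).injective this)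
  have hone : σ ^ (j - i) = 1 := (hc.pow_eq_one_iff' hx).2 key
  have hdvd := orderOf_dvd_of_pow_eq_one hone
  have : j - i = 0 := by
    by_contra hne
    exact absurd (Nat.le_of_dvd (Nat.pos_of_ne_zero hne) hdvd) (by omega)
  omega

variable {B : Finset G}

/-- The rotation permutation of `G` induced by an ordering of `B`. -/
def rotPerm (f : Fin B.card ≃ {x // x ∈ B}) [NeZero B.card] : Perm G where
  toFun g := if h : g ∈ B then ↑(f (f.symm ⟨g, h⟩ + 1)) else g
  invFun g := if h : g ∈ B then ↑(f (f.symm ⟨g, h⟩ - 1)) else g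
  left_inv g := by
    by_cases h : g ∈ B
    · simp only [dif_pos h]
      have hmem : (↑(f (f.symm ⟨g, h⟩ + 1)) : G) ∈ B := (f _).2
      rw [dif_pos hmem]
      rw [show (⟨↑(f (f.symm ⟨g, h⟩ + 1)), hmem⟩ : {x // x ∈ B}) = f (f.symm ⟨g, h⟩ + 1) from rfl]
      rw [Equiv.symm_apply_apply, add_sub_cancel_right, Equiv.apply_symm_apply]
    · simp [h]
  right_inv g := by
    by_cases h : g ∈ B
    · simp only [dif_pos h]
      have hmem : (↑(f (f.symm ⟨g, h⟩ - 1)) : G) ∈ B := (f _).2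
      rw [dif_pos hmem]
      rw [show (⟨↑(f (f.symm ⟨g, h⟩ - 1)), hmem⟩ : {x // x ∈ B}) = f (f.symm ⟨g, h⟩ - 1) from rfl]
      rw [Equiv.symm_apply_apply, sub_add_cancel, Equiv.apply_symm_apply]
    · simp [h]

lemma rotPerm_apply (f : Fin B.card ≃ {x // x ∈ B}) [NeZero B.card] (i : Fin B.card) :
    rotPerm f ↑(f i) = ↑(f (i + 1)) := by
  have hmem : (↑(f i) : G) ∈ B := (f i).2
  show (if h : (↑(f i) : G) ∈ B then (↑(f (f.symm ⟨↑(f i), h⟩ + 1)) : G) else ↑(f i)) = _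
  rw [dif_pos hmem]
  rw [show (⟨↑(f i), hmem⟩ : {x // x ∈ B}) = f i from rfl, Equiv.symm_apply_apply]

lemma rotPerm_apply_not_mem (f : Fin B.card ≃ {x // x ∈ B}) [NeZero B.card] {g : G}
    (h : g ∉ B) : rotPerm f g = g := by
  show (if h : g ∈ B then (↑(f (f.symm ⟨g, h⟩ + 1)) : G) else g) = g
  rw [dif_neg h]

open Fin.NatCast in
lemma rotPerm_pow (f : Fin B.card ≃ {x // x ∈ B}) [NeZero B.card] (i : Fin B.card) (k : ℕ) :
    (rotPerm f ^ k) ↑(f i) = ↑(f (i + (k : Fin B.card))) := by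
  induction k with
  | zero => simp
  | succ k ih =>
    rw [pow_succ', Equiv.Perm.mul_apply, ih, rotPerm_apply]
    congr 2
    push_cast
    rw [add_assoc]

lemma fin_one_ne_zero' (h : 2 ≤ B.card) [NeZero B.card] : (1 : Fin B.card) ≠ 0 := by
  intro hc
  have h1 : (1 : Fin B.card).val = 1 := by
    have : (1 : Fin B.card).val = 1 % B.card := rfl
    rw [this, Nat.mod_eq_of_lt (by omega)]
  rw [hc] at h1
  simp at h1

lemma rotPerm_support (f : Fin B.card ≃ {x // x ∈ B}) [NeZero B.card] (h2 : 2 ≤ B.card) :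
    (rotPerm f).support = B := by
  ext g
  rw [Equiv.Perm.mem_support]
  constructor
  · intro hg
    by_contra hB
    exact hg (rotPerm_apply_not_mem f hB)
  · intro hg
    have : g = ↑(f (f.symm ⟨g, hg⟩)) := by rw [Equiv.apply_symm_apply]
    rw [this, rotPerm_apply]
    intro hc
    have := f.injective (Subtype.coe_injective hc)
    have h10 : (1 : Fin B.card) = 0 := by
      have := add_left_cancel (a := f.symm ⟨g, hg⟩) (by rw [this, add_zero] : f.symm ⟨g, hg⟩ + 1 = f.symm ⟨g, hg⟩ + 0)
      exact this
    exact fin_one_ne_zero' h2 h10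

open Fin.NatCast in
lemma rotPerm_isCycle (f : Fin B.card ≃ {x // x ∈ B}) [NeZero B.card] (h2 : 2 ≤ B.card) :
    (rotPerm f).IsCycle := by
  refine ⟨↑(f 0), ?_, ?_⟩
  · rw [rotPerm_apply]
    intro hc
    have := f.injective (Subtype.coe_injective hc)
    exact fin_one_ne_zero' h2 (by rw [← zero_add (1 : Fin B.card), this])
  · intro y hy
    have hyB : y ∈ B := by
      by_contra hB
      exact hy (rotPerm_apply_not_mem f hB)
    refine ⟨((f.symm ⟨y, hyB⟩ : Fin B.card).val : ℤ), ?_⟩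
    rw [zpow_natCast, rotPerm_pow]
    rw [zero_add, Fin.cast_val_eq_self, Equiv.apply_symm_apply]


lemma card_pinned [NeZero B.card] (b₀ : G) (hb₀ : b₀ ∈ B) :
    Fintype.card {f : Fin B.card ≃ {x // x ∈ B} // f 0 = ⟨b₀, hb₀⟩} = (B.card - 1).factorial := by
  set z : Fin B.card := 0
  set b : {x // x ∈ B} := ⟨b₀, hb₀⟩
  have e₀ : (({z} : Set (Fin B.card)) : Type _) ≃ (({b} : Set {x // x ∈ B}) : Type _) :=
    Equiv.ofUnique _ _
  have E1 := Equiv.Set.compl e₀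
  have E2 : {f : Fin B.card ≃ {x // x ∈ B} // f z = b} ≃
      {e : Fin B.card ≃ {x // x ∈ B} // ∀ x : ({z} : Set (Fin B.card)), e ↑x = ↑(e₀ x)} := by
    apply Equiv.subtypeEquivRight
    intro f
    constructor
    · intro h x
      have hx : (x : Fin B.card) = z := x.2
      have hex : ((e₀ x : {x // x ∈ B}) : _) = b := (e₀ x).2
      rw [hx, h]; exact hex.symm
    · intro h
      have := h ⟨z, rfl⟩
      have hex : ((e₀ ⟨z, rfl⟩ : {x // x ∈ B}) : _) = b := (e₀ ⟨z, rfl⟩).2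
      rw [this, hex]
  rw [Fintype.card_congr (E2.trans E1)]
  have c1 : Fintype.card (({z}ᶜ : Set (Fin B.card)) : Type _) = B.card - 1 := by
    rw [Fintype.card_compl_set, Set.card_singleton, Fintype.card_fin]
  have c2 : Fintype.card (({b}ᶜ : Set {x // x ∈ B}) : Type _) = B.card - 1 := by
    rw [Fintype.card_compl_set, Set.card_singleton, Fintype.card_coe]
  rw [Fintype.card_equiv (Fintype.equivOfCardEq (by rw [c1, c2])), c1]

open Fin.NatCast in
lemma card_cycles_support (h2 : 2 ≤ B.card) :
    (univ.filter fun σ : Perm G => σ.IsCycle ∧ σ.support = B).card = (B.card - 1).factorial := by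
  haveI : NeZero B.card := ⟨by omega⟩
  obtain ⟨b₀, hb₀⟩ := Finset.card_pos.mp (show 0 < B.card by omega)
  have hmem : ∀ (σ : Perm G), σ.support = B → ∀ (k : ℕ), (σ ^ k) b₀ ∈ B := by
    intro σ hs k
    have : (σ ^ k) b₀ ∈ σ.support := Equiv.Perm.pow_apply_mem_support.2 (by rw [hs]; exact hb₀)
    rwa [hs] at this
  rw [← Fintype.card_subtype, ← card_pinned (B := B) b₀ hb₀]
  have horder : ∀ (σ : Perm G), σ.IsCycle → σ.support = B → orderOf σ = B.card := by
    intro σ hc hs; rw [hc.orderOf, hs]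
  have hbij : ∀ (σs : {σ : Perm G // σ.IsCycle ∧ σ.support = B}),
      Function.Bijective (fun i : Fin B.card =>
        (⟨(σs.1 ^ (i : ℕ)) b₀, hmem σs.1 σs.2.2 i⟩ : {x // x ∈ B})) := by
    rintro ⟨σ, hc, hs⟩
    have hb : σ b₀ ≠ b₀ := Equiv.Perm.mem_support.1 (by rw [hs]; exact hb₀)
    have ho := horder σ hc hs
    refine (Fintype.bijective_iff_injective_and_card _).2 ⟨?_, by simp [Fintype.card_coe]⟩
    intro i j hij
    exact Fin.ext (pow_inj_of_cycle hc hb (lt_of_lt_of_eq i.2 ho.symm) (lt_of_lt_of_eq j.2 ho.symm) (Subtype.ext_iff.1 hij))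
  refine Fintype.card_of_bijective (f := fun σs =>
    (⟨Equiv.ofBijective _ (hbij σs), Subtype.ext (by simp)⟩ :
      {f : Fin B.card ≃ {x // x ∈ B} // f 0 = ⟨b₀, hb₀⟩})) ⟨?_, ?_⟩
  · -- injective
    rintro ⟨σ, hcσ, hsσ⟩ ⟨τ, hcτ, hsτ⟩ h
    have hval : ∀ i : Fin B.card, (σ ^ (i : ℕ)) b₀ = (τ ^ (i : ℕ)) b₀ := by
      intro i
      have := congrArg (fun fs => ((fs : {f : Fin B.card ≃ {x // x ∈ B} // f 0 = ⟨b₀, hb₀⟩}).1 i : G)) h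
      simpa [Equiv.ofBijective] using this
    apply Subtype.ext
    apply Equiv.Perm.ext
    intro g
    by_cases hg : g ∈ B
    · obtain ⟨i, hi⟩ := (hbij ⟨σ, hcσ, hsσ⟩).2 ⟨g, hg⟩
      have hi' : (σ ^ (i : ℕ)) b₀ = g := Subtype.ext_iff.1 hi
      set i' : Fin B.card := ⟨((i : ℕ) + 1) % B.card, Nat.mod_lt _ (by omega)⟩
      have e1 : σ g = (σ ^ ((i : ℕ) + 1)) b₀ := by
        rw [pow_succ', Equiv.Perm.mul_apply, hi']
      have e2 : (σ ^ ((i' : ℕ))) b₀ = (σ ^ ((i : ℕ) + 1)) b₀ := by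
        show (σ ^ (((i : ℕ) + 1) % B.card)) b₀ = _
        have hm : ((i : ℕ) + 1) % B.card = ((i : ℕ) + 1) % orderOf σ := by
          rw [horder σ hcσ hsσ]
        rw [hm, pow_mod_orderOf]
      have e3 : (τ ^ ((i' : ℕ))) b₀ = (τ ^ ((i : ℕ) + 1)) b₀ := by
        show (τ ^ (((i : ℕ) + 1) % B.card)) b₀ = _
        have hm : ((i : ℕ) + 1) % B.card = ((i : ℕ) + 1) % orderOf τ := by
          rw [horder τ hcτ hsτ]
        rw [hm, pow_mod_orderOf]
      have e4 : τ g = (τ ^ ((i : ℕ) + 1)) b₀ := by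
        rw [pow_succ', Equiv.Perm.mul_apply, ← hval i, hi']
      rw [e1, ← e2, hval i', e3, ← e4]
    · have h1 : σ g = g := Equiv.Perm.notMem_support.1 (by rw [hsσ]; exact hg)
      have h2 : τ g = g := Equiv.Perm.notMem_support.1 (by rw [hsτ]; exact hg)
      rw [h1, h2]
  · -- surjective
    rintro ⟨f, hf⟩
    refine ⟨⟨rotPerm f, rotPerm_isCycle f h2, rotPerm_support f h2⟩, ?_⟩
    apply Subtype.ext
    apply Equiv.ext
    intro i
    apply Subtype.ext
    show ((rotPerm f) ^ (i : ℕ)) b₀ = ↑(f i)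
    have hb0 : b₀ = ↑(f 0) := by rw [hf]
    rw [hb0, rotPerm_pow, zero_add, Fin.cast_val_eq_self]

lemma isCycle_swap_mul_insert {σ' : Perm G} (hc : σ'.IsCycle) {a b : G}
    (ha : σ' a = a) (hb : σ' b ≠ b) (hab : a ≠ b) : (Equiv.swap a b * σ').IsCycle := by
  have hσa : (Equiv.swap a b * σ') a = b := by
    rw [Equiv.Perm.mul_apply, ha, Equiv.swap_apply_left]
  have hbne : ∀ k : ℕ, (σ' ^ k) b ≠ a := by
    intro k hk
    have hmem : (σ' ^ k) b ∈ σ'.support :=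
      Equiv.Perm.pow_apply_mem_support.2 (Equiv.Perm.mem_support.2 hb)
    rw [hk] at hmem
    exact (Equiv.Perm.mem_support.1 hmem) ha
  have claim : ∀ j, j < orderOf σ' → ((Equiv.swap a b * σ') ^ (j + 1)) a = (σ' ^ j) b := by
    intro j
    induction j with
    | zero => intro _; simpa using hσa
    | succ j ihj =>
      intro hj
      have hj' : j < orderOf σ' := by omega
      rw [pow_succ', Equiv.Perm.mul_apply, ihj hj', Equiv.Perm.mul_apply]
      have h1 : σ' ((σ' ^ j) b) = (σ' ^ (j + 1)) b := by
        rw [pow_succ', Equiv.Perm.mul_apply]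
      rw [h1]
      have hne_a : (σ' ^ (j + 1)) b ≠ a := hbne (j + 1)
      have hne_b : (σ' ^ (j + 1)) b ≠ b := by
        intro hfix
        have h1' : σ' ^ (j + 1) = 1 := (hc.pow_eq_one_iff' hb).2 hfix
        have := orderOf_dvd_of_pow_eq_one h1'
        have := Nat.le_of_dvd (by omega) this
        omega
      rw [Equiv.swap_apply_of_ne_of_ne hne_a hne_b]
  refine ⟨a, by rw [hσa]; exact hab.symm, ?_⟩
  intro y hy
  by_cases hya : y = a
  · exact ⟨0, by simp [hya]⟩
  · have hy' : σ' y ≠ y := by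
      intro hfix
      apply hy
      rw [Equiv.Perm.mul_apply, hfix]
      by_cases hyb : y = b
      · exact absurd hfix (hyb ▸ hb)
      · exact Equiv.swap_apply_of_ne_of_ne hya hyb
    obtain ⟨i, hi⟩ := hc.exists_pow_eq hb hy'
    have hL : 0 < orderOf σ' := orderOf_pos σ'
    have hji : (σ' ^ (i % orderOf σ')) b = y := by rw [pow_mod_orderOf, hi]
    refine ⟨(((i % orderOf σ') + 1 : ℕ) : ℤ), ?_⟩
    rw [zpow_natCast, claim _ (Nat.mod_lt _ hL), hji]

lemma card_cycles_arcs : ∀ (k : ℕ) (A B : Finset G) (ι : G → G),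
    A.card = k → A ⊆ B → (∀ a ∈ A, ι a ∈ B) → (∀ a ∈ A, ι a ∉ A) →
    Set.InjOn ι ↑A → A.card + 2 ≤ B.card →
    (univ.filter fun σ : Perm G => σ.IsCycle ∧ σ.support = B ∧ ∀ a ∈ A, σ a = ι a).card
      = (B.card - 1 - A.card).factorial := by
  intro k
  induction k with
  | zero =>
    intro A B ι hA hAB hιB hιA hinj hcard
    have h2B : 2 ≤ B.card := by omega
    rw [Finset.card_eq_zero.1 hA]
    have : ∀ σ : Perm G, (σ.IsCycle ∧ σ.support = B ∧ ∀ a ∈ (∅ : Finset G), σ a = ι a)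
        ↔ (σ.IsCycle ∧ σ.support = B) := by
      intro σ; constructor
      · rintro ⟨h1, h2, _⟩; exact ⟨h1, h2⟩
      · rintro ⟨h1, h2⟩; exact ⟨h1, h2, by simp⟩
    rw [Finset.filter_congr (fun σ _ => this σ)]
    simpa using card_cycles_support h2B
  | succ k ih =>
    intro A B ι hA hAB hιB hιA hinj hcard
    obtain ⟨a, ha⟩ := Finset.card_pos.mp (show 0 < A.card by omega)
    have haB : a ∈ B := hAB ha
    have hbB : ι a ∈ B := hιB a ha
    have hbA : ι a ∉ A := hιA a ha
    have hba : ι a ≠ a := fun h => hbA (by rwa [h])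
    have hcard3 : 3 ≤ B.card := by omega
    set b := ι a with hb
    have hA' : (A.erase a).card = k := by rw [Finset.card_erase_of_mem ha, hA]; omega
    have key := ih (A.erase a) (B.erase a) ι hA'
      (Finset.erase_subset_erase a hAB)
      (fun a' ha' => by
        have haA' : a' ∈ A := Finset.mem_of_mem_erase ha'
        refine Finset.mem_erase.2 ⟨?_, hιB a' haA'⟩
        intro h; exact (hιA a' haA') (h ▸ ha))
      (fun a' ha' h => (hιA a' (Finset.mem_of_mem_erase ha')) (Finset.mem_of_mem_erase h))
      (hinj.mono (by simp [Finset.coe_subset, Finset.erase_subset]))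
      (by rw [hA', Finset.card_erase_of_mem haB]; omega)
    have hfact : (B.card - 1 - A.card).factorial = ((B.erase a).card - 1 - (A.erase a).card).factorial := by
      rw [Finset.card_erase_of_mem haB, hA', hA]
      congr 1
      omega
    rw [hfact, ← key]
    apply Finset.card_bij' (fun σ _ => Equiv.swap a b * σ) (fun σ _ => Equiv.swap a b * σ)
    · -- forward membership
      intro σ hσ
      simp only [Finset.mem_filter, Finset.mem_univ, true_and] at hσ ⊢
      obtain ⟨hc, hs, harcs⟩ := hσ
      have hσab : σ a = b := harcs a ha
      have hσa : σ a ≠ a := hσab ▸ hba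
      have hσσa : σ (σ a) ≠ a := by
        intro hfix
        have := hc.eq_swap_of_apply_apply_eq_self hσa hfix
        have hsupp := congrArg Equiv.Perm.support this
        rw [hs, Equiv.Perm.support_swap hσa.symm] at hsupp
        have := congrArg Finset.card hsupp
        rw [Finset.card_insert_of_notMem (by simp only [Finset.mem_singleton]; exact fun h => hσa h.symm), Finset.card_singleton] at this
        omega
      refine ⟨?_, ?_, ?_⟩
      · have := hc.swap_mul hσa hσσa
        rwa [hσab] at this
      · have := Equiv.Perm.support_swap_mul_eq σ a hσσa
        rw [hσab] at this
        rw [this, hs, Finset.erase_eq]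
      · intro a' ha'
        have haA : a' ∈ A := Finset.mem_of_mem_erase ha'
        have hne : a' ≠ a := Finset.ne_of_mem_erase ha'
        rw [Equiv.Perm.mul_apply, harcs a' haA]
        refine Equiv.swap_apply_of_ne_of_ne (fun h => (hιA a' haA) (h ▸ ha)) ?_
        intro h
        exact hne (hinj (Finset.mem_coe.2 haA) (Finset.mem_coe.2 ha) h)
    · -- backward membership
      intro σ' hσ'
      simp only [Finset.mem_filter, Finset.mem_univ, true_and] at hσ' ⊢
      obtain ⟨hc', hs', harcs'⟩ := hσ'
      have ha' : σ' a = a := by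
        have : a ∉ σ'.support := by rw [hs']; simp
        exact Equiv.Perm.notMem_support.1 this
      have hb' : σ' b ≠ b := by
        have : b ∈ σ'.support := by rw [hs']; exact Finset.mem_erase.2 ⟨hba, hbB⟩
        exact Equiv.Perm.mem_support.1 this
      refine ⟨isCycle_swap_mul_insert hc' ha' hb' (show a ≠ b from fun h => hba h.symm), ?_, ?_⟩
      · ext y
        rw [Equiv.Perm.mem_support]
        constructor
        · intro hy
          by_contra hyB
          apply hy
          have hyA : σ' y = y := by
            refine Equiv.Perm.notMem_support.1 ?_
            rw [hs']
            intro hmem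
            exact hyB (Finset.mem_of_mem_erase hmem)
          rw [Equiv.Perm.mul_apply, hyA]
          have hya : y ≠ a := fun h => hyB (h ▸ haB)
          have hyb : y ≠ b := fun h => hyB (h ▸ hbB)
          exact Equiv.swap_apply_of_ne_of_ne hya hyb
        · intro hy
          by_cases hya : y = a
          · rw [hya, Equiv.Perm.mul_apply, ha', Equiv.swap_apply_left]
            exact hba
          · have hyS : σ' y ≠ y := by
              refine Equiv.Perm.mem_support.1 ?_
              rw [hs']
              exact Finset.mem_erase.2 ⟨hya, hy⟩
            rw [Equiv.Perm.mul_apply]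
            have hσ'ya : σ' y ≠ a := by
              intro h
              have := σ'.injective (h.trans ha'.symm)
              exact hya this
            by_cases hσ'yb : σ' y = b
            · rw [hσ'yb, Equiv.swap_apply_right]
              exact Ne.symm hya
            · rw [Equiv.swap_apply_of_ne_of_ne hσ'ya hσ'yb]
              exact hyS
      · intro a' ha'A
        by_cases haa : a' = a
        · rw [haa, Equiv.Perm.mul_apply, ha', Equiv.swap_apply_left]
        · have hmem : a' ∈ A.erase a := Finset.mem_erase.2 ⟨haa, ha'A⟩
          rw [Equiv.Perm.mul_apply, harcs' a' hmem]
          refine Equiv.swap_apply_of_ne_of_ne (fun h => (hιA a' ha'A) (h ▸ ha)) ?_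
          intro h
          exact haa (hinj (Finset.mem_coe.2 ha'A) (Finset.mem_coe.2 ha) h)
    · intro σ _
      rw [← mul_assoc, Equiv.swap_mul_self, one_mul]
    · intro σ _
      rw [← mul_assoc, Equiv.swap_mul_self, one_mul]

lemma card_adm : ∀ (nn : ℕ) (N : Finset G) (ι : G → G), N.card = nn →
    (∀ x ∈ N, ι x ∈ N) → (∀ x ∈ N, ι (ι x) = x) → (∀ x ∈ N, ι x ≠ x) →
    ∃ m : ℕ, N.card = 2 * m ∧ ∀ k : ℕ,
      (univ.filter fun A : Finset G => A ⊆ N ∧ (∀ a ∈ A, ι a ∉ A) ∧ A.card = k).card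
        = m.choose k * 2 ^ k := by
  intro nn
  induction nn using Nat.strong_induction_on with
  | _ nn ih =>
    intro N ι hcard hmem hinv hnofix
    by_cases hN : N = ∅
    · refine ⟨0, by simp [hN], ?_⟩
      intro k
      subst hN
      rcases Nat.eq_zero_or_pos k with hk | hk
      · subst hk
        have : (univ.filter fun A : Finset G =>
            A ⊆ (∅ : Finset G) ∧ (∀ a ∈ A, ι a ∉ A) ∧ A.card = 0) = {∅} := by
          ext A
          simp only [mem_filter, mem_univ, true_and, Finset.subset_empty, mem_singleton]
          constructor
          · rintro ⟨h, _⟩; exact h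
          · rintro rfl; exact ⟨rfl, by simp, rfl⟩
        rw [this]; simp
      · have : (univ.filter fun A : Finset G =>
            A ⊆ (∅ : Finset G) ∧ (∀ a ∈ A, ι a ∉ A) ∧ A.card = k) = ∅ := by
          ext A
          simp only [mem_filter, mem_univ, true_and, Finset.subset_empty, notMem_empty, iff_false,
            not_and]
          rintro rfl _
          simp; omega
        rw [this]
        simp [Nat.choose_eq_zero_of_lt hk]
    · obtain ⟨x, hx⟩ := Finset.nonempty_iff_ne_empty.2 hN
      set y := ι x with hy
      have hyN : y ∈ N := hmem x hx
      have hyx : y ≠ x := hnofix x hx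
      have hxy : ι y = x := hinv x hx
      set N' := (N.erase x).erase y with hN'
      have hyex : y ∈ N.erase x := Finset.mem_erase.2 ⟨hyx, hyN⟩
      have hN'card : N'.card = nn - 2 := by
        rw [hN', Finset.card_erase_of_mem hyex, Finset.card_erase_of_mem hx, hcard]; omega
      have hmemN' : ∀ z, z ∈ N' → z ∈ N ∧ z ≠ x ∧ z ≠ y := by
        intro z hz
        have h1 := Finset.mem_erase.1 hz
        have h2 := Finset.mem_erase.1 h1.2
        exact ⟨h2.2, h2.1, h1.1⟩
      have hN'sub : N' ⊆ N := fun z hz => (hmemN' z hz).1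
      have hxN' : x ∉ N' := fun h => (hmemN' x h).2.1 rfl
      have hyN' : y ∉ N' := fun h => (hmemN' y h).2.2 rfl
      have hstep : ∀ z ∈ N', ι z ∈ N' := by
        intro z hz
        obtain ⟨hzN, hzx, hzy⟩ := hmemN' z hz
        refine Finset.mem_erase.2 ⟨?_, Finset.mem_erase.2 ⟨?_, hmem z hzN⟩⟩
        · intro h
          exact hzx (by rw [← hinv z hzN, h, hxy])
        · intro h
          exact hzy (by rw [← hinv z hzN, h])
      have hnn2 : 2 ≤ nn := by
        have : 2 ≤ N.card := Finset.one_lt_card_iff.2 ⟨y, x, hyN, hx, hyx⟩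
        omega
      obtain ⟨m', hm'card, hm'count⟩ := ih (nn - 2) (by omega) N' ι hN'card hstep
        (fun z hz => hinv z (hN'sub hz)) (fun z hz => hnofix z (hN'sub hz))
      refine ⟨m' + 1, by omega, ?_⟩
      intro k
      set S := univ.filter fun A : Finset G => A ⊆ N ∧ (∀ a ∈ A, ι a ∉ A) ∧ A.card = k with hS
      rcases Nat.eq_zero_or_pos k with hk | hk
      · subst hk
        have : S = {∅} := by
          ext A
          simp only [hS, mem_filter, mem_univ, true_and, mem_singleton]
          constructor
          · rintro ⟨_, _, h⟩; exact Finset.card_eq_zero.1 h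
          · rintro rfl; exact ⟨Finset.empty_subset _, by simp, rfl⟩
        rw [this]; simp
      · obtain ⟨k', rfl⟩ : ∃ k', k = k' + 1 := ⟨k - 1, by omega⟩
        have hsplit1 := Finset.card_filter_add_card_filter_not (s := S) (p := fun A => x ∈ A)
        have hsplit2 := Finset.card_filter_add_card_filter_not
          (s := S.filter (fun A => ¬ x ∈ A)) (p := fun A => y ∈ A)
        -- part (a): x ∈ A
        have ha : (S.filter (fun A => x ∈ A)).card
            = (univ.filter fun A : Finset G => A ⊆ N' ∧ (∀ a ∈ A, ι a ∉ A) ∧ A.card = k').card := by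
          refine Finset.card_bij' (fun A _ => A.erase x) (fun A' _ => insert x A') ?_ ?_ ?_ ?_
          · intro A hA
            simp only [hS, mem_filter, mem_univ, true_and] at hA ⊢
            obtain ⟨⟨hsub, hadm, hcardA⟩, hxA⟩ := hA
            have hyA : y ∉ A := hadm x hxA
            refine ⟨?_, ?_, ?_⟩
            · intro z hz
              obtain ⟨hzx, hzA⟩ := Finset.mem_erase.1 hz
              refine Finset.mem_erase.2 ⟨?_, Finset.mem_erase.2 ⟨hzx, hsub hzA⟩⟩
              intro h; exact hyA (h ▸ hzA)
            · intro a haA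
              have := hadm a (Finset.mem_of_mem_erase haA)
              intro h; exact this (Finset.mem_of_mem_erase h)
            · rw [Finset.card_erase_of_mem hxA, hcardA]; omega
          · intro A' hA'
            simp only [hS, mem_filter, mem_univ, true_and] at hA' ⊢
            obtain ⟨hsub, hadm, hcardA⟩ := hA'
            have hxA' : x ∉ A' := fun h => hxN' (hsub h)
            have hyA' : y ∉ A' := fun h => hyN' (hsub h)
            refine ⟨⟨?_, ?_, ?_⟩, Finset.mem_insert_self x A'⟩
            · intro z hz
              rcases Finset.mem_insert.1 hz with rfl | hz
              · exact hx
              · exact hN'sub (hsub hz)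
            · intro a haA
              rcases Finset.mem_insert.1 haA with rfl | haA
              · rw [← hy]
                intro h
                rcases Finset.mem_insert.1 h with h1 | h1
                · exact hyx h1
                · exact hyA' h1
              · intro h
                rcases Finset.mem_insert.1 h with h1 | h1
                · have haN : a ∈ N := hN'sub (hsub haA)
                  have : a = y := by rw [← hinv a haN, h1, ← hy]
                  exact hyA' (this ▸ haA)
                · exact hadm a haA h1
            · rw [Finset.card_insert_of_notMem hxA', hcardA]
          · intro A hA
            simp only [hS, mem_filter] at hA
            exact Finset.insert_erase hA.2
          · intro A' hA'
            simp only [mem_filter, mem_univ, true_and] at hA'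
            exact Finset.erase_insert (fun h => hxN' (hA'.1 h))
        -- part (b): x ∉ A, y ∈ A
        have hb : ((S.filter (fun A => ¬ x ∈ A)).filter (fun A => y ∈ A)).card
            = (univ.filter fun A : Finset G => A ⊆ N' ∧ (∀ a ∈ A, ι a ∉ A) ∧ A.card = k').card := by
          refine Finset.card_bij' (fun A _ => A.erase y) (fun A' _ => insert y A') ?_ ?_ ?_ ?_
          · intro A hA
            simp only [hS, mem_filter, mem_univ, true_and] at hA ⊢
            obtain ⟨⟨⟨hsub, hadm, hcardA⟩, hxA⟩, hyA⟩ := hA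
            refine ⟨?_, ?_, ?_⟩
            · intro z hz
              obtain ⟨hzy, hzA⟩ := Finset.mem_erase.1 hz
              refine Finset.mem_erase.2 ⟨hzy, Finset.mem_erase.2 ⟨?_, hsub hzA⟩⟩
              intro h; exact hxA (h ▸ hzA)
            · intro a haA
              have := hadm a (Finset.mem_of_mem_erase haA)
              intro h; exact this (Finset.mem_of_mem_erase h)
            · rw [Finset.card_erase_of_mem hyA, hcardA]; omega
          · intro A' hA'
            simp only [hS, mem_filter, mem_univ, true_and] at hA' ⊢
            obtain ⟨hsub, hadm, hcardA⟩ := hA'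
            have hxA' : x ∉ A' := fun h => hxN' (hsub h)
            have hyA' : y ∉ A' := fun h => hyN' (hsub h)
            refine ⟨⟨⟨?_, ?_, ?_⟩, ?_⟩, Finset.mem_insert_self y A'⟩
            · intro z hz
              rcases Finset.mem_insert.1 hz with rfl | hz
              · exact hyN
              · exact hN'sub (hsub hz)
            · intro a haA
              rcases Finset.mem_insert.1 haA with rfl | haA
              · rw [hxy]
                intro h
                rcases Finset.mem_insert.1 h with h1 | h1
                · exact hyx h1.symm
                · exact hxA' h1
              · intro h
                rcases Finset.mem_insert.1 h with h1 | h1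
                · have haN : a ∈ N := hN'sub (hsub haA)
                  have : a = x := by rw [← hinv a haN, h1, hxy]
                  exact hxA' (this ▸ haA)
                · exact hadm a haA h1
            · rw [Finset.card_insert_of_notMem hyA', hcardA]
            · intro h
              rcases Finset.mem_insert.1 h with h1 | h1
              · exact hyx h1.symm
              · exact hxA' h1
          · intro A hA
            simp only [hS, mem_filter] at hA
            exact Finset.insert_erase hA.2
          · intro A' hA'
            simp only [mem_filter, mem_univ, true_and] at hA'
            exact Finset.erase_insert (fun h => hyN' (hA'.1 h))
        -- part (c): x ∉ A, y ∉ A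
        have hcset : ((S.filter (fun A => ¬ x ∈ A)).filter (fun A => ¬ y ∈ A))
            = (univ.filter fun A : Finset G => A ⊆ N' ∧ (∀ a ∈ A, ι a ∉ A) ∧ A.card = k' + 1) := by
          ext A
          simp only [hS, mem_filter, mem_univ, true_and]
          constructor
          · rintro ⟨⟨⟨hsub, hadm, hcardA⟩, hxA⟩, hyA⟩
            refine ⟨?_, hadm, hcardA⟩
            intro z hz
            refine Finset.mem_erase.2 ⟨?_, Finset.mem_erase.2 ⟨?_, hsub hz⟩⟩
            · intro h; exact hyA (h ▸ hz)
            · intro h; exact hxA (h ▸ hz)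
          · rintro ⟨hsub, hadm, hcardA⟩
            exact ⟨⟨⟨fun z hz => hN'sub (hsub hz), hadm, hcardA⟩,
              fun h => hxN' (hsub h)⟩, fun h => hyN' (hsub h)⟩
        rw [ha] at hsplit1
        rw [hb, hcset] at hsplit2
        rw [hm'count k', hm'count (k' + 1)] at *
        have : S.card = m'.choose k' * 2 ^ k' + (m'.choose k' * 2 ^ k' + m'.choose (k' + 1) * 2 ^ (k' + 1)) := by
          omega
        rw [this, Nat.choose_succ_succ (m') k']
        ring

end NoGroup

section RealLemmas
open Finset
/-- telescoping bound for products -/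
lemma prod_sub_pow_bound (a : ℕ → ℝ) (x M : ℝ) (hx0 : 0 ≤ x) (hx1 : x ≤ 1) (K : ℕ)
    (hpre : ∀ k ≤ K, 0 ≤ ∏ j ∈ range k, a j ∧ (∏ j ∈ range k, a j) ≤ M) :
    ∀ k ≤ K, |(∏ j ∈ range k, a j) - x ^ k| ≤ ∑ j ∈ range k, M * |a j - x| := by
  intro k
  induction k with
  | zero => intro _; simp
  | succ k ih =>
    intro hk
    have hk' : k ≤ K := by omega
    have hih := ih hk'
    obtain ⟨hc0, hcM⟩ := hpre k hk'
    rw [Finset.prod_range_succ, pow_succ, Finset.sum_range_succ]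
    have key : (∏ j ∈ range k, a j) * a k - x ^ k * x
        = (∏ j ∈ range k, a j) * (a k - x) + x * ((∏ j ∈ range k, a j) - x ^ k) := by ring
    rw [key]
    calc |(∏ j ∈ range k, a j) * (a k - x) + x * ((∏ j ∈ range k, a j) - x ^ k)|
        ≤ |(∏ j ∈ range k, a j) * (a k - x)| + |x * ((∏ j ∈ range k, a j) - x ^ k)| :=
          abs_add_le _ _
      _ ≤ M * |a k - x| + 1 * |(∏ j ∈ range k, a j) - x ^ k| := by
          rw [abs_mul, abs_mul]
          apply add_le_add
          · exact mul_le_mul_of_nonneg_right (by rwa [abs_of_nonneg hc0]) (abs_nonneg _)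
          · exact mul_le_mul_of_nonneg_right (by rwa [abs_of_nonneg hx0]) (abs_nonneg _)
      _ ≤ M * |a k - x| + ∑ j ∈ range k, M * |a j - x| := by
          rw [one_mul]; gcongr
      _ = (∑ j ∈ range k, M * |a j - x|) + M * |a k - x| := by ring

lemma kfact_bound : ∀ k : ℕ, k * (k + 1) * 2 ^ k ≤ 16 * k.factorial := by
  intro k
  induction k with
  | zero => simp
  | succ k ih =>
    by_cases hk : k < 3
    · interval_cases k <;> decide
    · push_neg at hk
      calc (k+1) * (k+1+1) * 2 ^ (k+1) = (2*(k+2)) * ((k+1) * 2^k) := by ring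
        _ ≤ (k*(k+1)) * ((k+1) * 2^k) := by
            apply Nat.mul_le_mul_right
            nlinarith
        _ = (k * (k+1) * 2^k) * (k+1) := by ring
        _ ≤ (16 * k.factorial) * (k+1) := Nat.mul_le_mul_right _ ih
        _ = 16 * (k+1).factorial := by rw [Nat.factorial_succ]; ring

/-- sum of k(k+1)/k! bound -/
lemma sum_kk_fact (m : ℕ) :
    ∑ k ∈ range (m+1), ((k : ℝ) * (k+1)) / (k.factorial : ℝ) ≤ 32 := by
  have h : ∀ k : ℕ, ((k : ℝ) * (k+1)) / (k.factorial : ℝ) ≤ 16 * (1/2)^k := by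
    intro k
    have hb := kfact_bound k
    have hbr : ((k : ℝ) * (k+1)) * 2^k ≤ 16 * (k.factorial : ℝ) := by exact_mod_cast hb
    have hf : (0:ℝ) < (k.factorial : ℝ) := by positivity
    rw [div_le_iff₀ hf]
    have h2 : (0:ℝ) < 2^k := by positivity
    rw [show (16 : ℝ) * (1/2)^k * (k.factorial:ℝ) = (16 * (k.factorial : ℝ)) / 2^k by
      rw [div_pow, one_pow]; ring]
    rw [le_div_iff₀ h2]
    linarith
  calc ∑ k ∈ range (m+1), ((k : ℝ) * (k+1)) / (k.factorial : ℝ)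
      ≤ ∑ k ∈ range (m+1), 16 * (1/2:ℝ)^k := Finset.sum_le_sum (fun k _ => h k)
    _ = 16 * ∑ k ∈ range (m+1), (1/2:ℝ)^k := by rw [Finset.mul_sum]
    _ ≤ 16 * 2 := by
        have := sum_geometric_two_le (m+1)
        nlinarith [this]
    _ = 32 := by norm_num

lemma exp_sub_one_le (u : ℝ) (hu0 : 0 ≤ u) (hu1 : u ≤ 1) :
    Real.exp u - 1 ≤ u * Real.exp 1 := by
  have h := Real.add_one_le_exp (-u)
  have hpos : (0:ℝ) < Real.exp u := Real.exp_pos u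
  have h2 : (1 - u) * Real.exp u ≤ 1 := by
    have : Real.exp (-u) * Real.exp u = 1 := by
      rw [← Real.exp_add]; simp
    nlinarith [h, hpos]
  have h3 : Real.exp u - 1 ≤ u * Real.exp u := by nlinarith
  have h4 : Real.exp u ≤ Real.exp 1 := Real.exp_le_exp.2 hu1
  nlinarith [hu0]

lemma analysis (n m f : ℕ) (hn : 4 ≤ n) (hnm : n = 2 * m + f) :
    |(∑ k ∈ Finset.range (m + 1),
        (-1 : ℝ) ^ k * (m.choose k) * 2 ^ k * ((n - 1 - k).factorial : ℝ))
        / ((n - 1).factorial : ℝ) - Real.exp (-1)|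
      ≤ 196 / n + (f : ℝ) / n := by
  have hn0 : (0:ℝ) < n := by exact_mod_cast (show 0 < n by omega)
  have hmr : 2*(m:ℝ) + (f:ℝ) = (n:ℝ) := by exact_mod_cast hnm.symm
  have hf0 : (0:ℝ) ≤ f := by positivity
  have hm0 : (0:ℝ) ≤ m := by positivity
  set x : ℝ := 2 * m / n with hxdef
  have hx0 : 0 ≤ x := by positivity
  have hx1 : x ≤ 1 := by
    rw [hxdef, div_le_one hn0]; linarith
  set a : ℕ → ℝ := fun j => 2 * ((m:ℝ) - j) / ((n:ℝ) - 1 - j) with hadef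
  have hden : ∀ j : ℕ, j < m → ((n:ℝ)/2 ≤ (n:ℝ) - 1 - j ∧ (0:ℝ) < (n:ℝ) - 1 - j) := by
    intro j hj
    have hj' : (j:ℝ) + 1 ≤ m := by exact_mod_cast hj
    constructor <;> linarith
  have ha0 : ∀ j : ℕ, j < m → 0 ≤ a j := by
    intro j hj
    have h2 := (hden j hj).2
    have hj' : (j:ℝ) + 1 ≤ m := by exact_mod_cast hj
    apply div_nonneg <;> linarith
  have ha2 : ∀ j : ℕ, j < m → a j ≤ 2 := by
    intro j hj
    have hd := hden j hj
    have hj' : (j:ℝ) + 1 ≤ m := by exact_mod_cast hj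
    rw [hadef]
    rw [div_le_iff₀ hd.2]
    have hj0 : (0:ℝ) ≤ j := by positivity
    linarith
  have ha1 : ∀ j : ℕ, 1 ≤ j → j < m → a j ≤ 1 := by
    intro j h1 hj
    have hd := hden j hj
    have hj' : (1:ℝ) ≤ (j:ℝ) := by exact_mod_cast h1
    rw [hadef, div_le_one hd.2]
    linarith
  have hc : ∀ k, k ≤ m → 0 ≤ (∏ j ∈ range k, a j) ∧ (∏ j ∈ range k, a j) ≤ 2 := by
    intro k
    induction k with
    | zero => intro _; constructor <;> simp
    | succ k ih =>
      intro hk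
      have hk' : k ≤ m := by omega
      obtain ⟨h0, hM⟩ := ih hk'
      have hkm : k < m := by omega
      rw [Finset.prod_range_succ]
      constructor
      · exact mul_nonneg h0 (ha0 k hkm)
      · rcases Nat.eq_zero_or_pos k with rfl | hkpos
        · simpa using ha2 0 hkm
        · calc (∏ j ∈ range k, a j) * a k ≤ (∏ j ∈ range k, a j) * 1 :=
              mul_le_mul_of_nonneg_left (ha1 k hkpos hkm) h0
            _ ≤ 2 := by rwa [mul_one]
  have hfactne : ((n-1).factorial : ℝ) ≠ 0 := by positivity
  -- the key ratio identity
  have hD : ∀ k, k ≤ m → ((m.choose k : ℝ) * 2^k * ((n - 1 - k).factorial : ℝ)) * (k.factorial : ℝ)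
      = (∏ j ∈ range k, a j) * ((n-1).factorial : ℝ) := by
    intro k
    induction k with
    | zero => intro _; simp
    | succ k ih =>
      intro hk
      have hk' : k ≤ m := by omega
      have IH := ih hk'
      have hkm : k < m := by omega
      have hd := (hden k hkm).2
      have hdne : (n:ℝ) - 1 - k ≠ 0 := ne_of_gt hd
      have hpos : 0 < n - 1 - k := by omega
      have hfs := Nat.mul_factorial_pred hpos.ne'
      have hidx : n - 1 - k - 1 = n - 1 - (k+1) := by omega
      rw [hidx] at hfs
      have hFk : ((n - 1 - k).factorial : ℝ) = ((n:ℝ) - 1 - k) * ((n - 1 - (k+1)).factorial : ℝ) := by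
        rw [← hfs, Nat.cast_mul]
        congr 1
        rw [Nat.sub_sub, Nat.cast_sub (show 1 + k ≤ n by omega)]
        push_cast
        ring
      have hch : (m.choose (k+1) : ℝ) * ((k:ℝ) + 1) = (m.choose k : ℝ) * ((m:ℝ) - k) := by
        have h := congrArg (Nat.cast : ℕ → ℝ) (Nat.choose_succ_right_eq m k)
        push_cast [Nat.cast_sub (le_of_lt hkm)] at h
        exact h
      rw [hFk] at IH
      rw [Finset.prod_range_succ, show a k = 2 * ((m:ℝ) - k) / ((n:ℝ) - 1 - k) from rfl]
      push_cast [Nat.factorial_succ]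
      field_simp
      linear_combination (2*((m:ℝ)-k)) * IH
        + (2^(k+1) * ((n - 1 - (k+1)).factorial : ℝ) * (k.factorial:ℝ) * ((n:ℝ)-1-k)) * hch
  -- rewrite the sum
  have hT : (∑ k ∈ Finset.range (m + 1),
        (-1 : ℝ) ^ k * (m.choose k) * 2 ^ k * ((n - 1 - k).factorial : ℝ))
        / ((n - 1).factorial : ℝ)
      = ∑ k ∈ Finset.range (m + 1), (-1:ℝ)^k * (∏ j ∈ range k, a j) / (k.factorial : ℝ) := by
    rw [Finset.sum_div]
    apply Finset.sum_congr rfl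
    intro k hk
    have hkm : k ≤ m := by
      have := Finset.mem_range.1 hk; omega
    have hkfne : (k.factorial : ℝ) ≠ 0 := by positivity
    have := hD k hkm
    field_simp
    linear_combination this
  rw [hT]
  -- bound on differences of products
  have hprod := prod_sub_pow_bound a x 2 hx0 hx1 m hc
  have hgauss : ∀ k : ℕ, (∑ j ∈ range k, ((j:ℝ)+1)) = k*(k+1)/2 := by
    intro k
    induction k with
    | zero => simp
    | succ k ih => rw [Finset.sum_range_succ, ih]; push_cast; ring
  have hdiff : ∀ k, k ≤ m → |(∏ j ∈ range k, a j) - x^k| ≤ 6*(k:ℝ)*(k+1)/n := by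
    intro k hk
    have h1 := hprod k hk
    have h2 : ∑ j ∈ range k, 2 * |a j - x| ≤ 6*(k:ℝ)*(k+1)/n := by
      have hax : ∀ j : ℕ, j < m → |a j - x| ≤ 6 * ((j:ℝ)+1) / n := by
        intro j hj
        have hd := hden j hj
        have hj' : (j:ℝ) + 1 ≤ m := by exact_mod_cast hj
        have hj0 : (0:ℝ) ≤ j := by positivity
        have hdne : (n:ℝ) - 1 - (j:ℝ) ≠ 0 := ne_of_gt hd.2
        have hnne : (n:ℝ) ≠ 0 := ne_of_gt hn0
        have hkey : a j - x = (2*(m:ℝ)*(1+(j:ℝ)) - 2*(n:ℝ)*(j:ℝ))/(((n:ℝ)-1-j) * n) := by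
          rw [hadef, hxdef]
          rw [div_sub_div _ _ hdne hnne, div_eq_div_iff (mul_ne_zero hdne hnne) (mul_ne_zero hdne hnne)]
          ring
        rw [hkey, abs_div]
        have hdenpos : (0:ℝ) < ((n:ℝ)-1-j) * n := mul_pos hd.2 hn0
        rw [abs_of_pos hdenpos]
        rw [div_le_div_iff₀ hdenpos hn0]
        have hnum : |2*(m:ℝ)*(1+(j:ℝ)) - 2*(n:ℝ)*(j:ℝ)| ≤ 3*(n:ℝ)*((j:ℝ)+1) := by
          rw [abs_le]
          constructor <;> nlinarith
        calc |2*(m:ℝ)*(1+(j:ℝ)) - 2*(n:ℝ)*(j:ℝ)| * n ≤ (3*(n:ℝ)*((j:ℝ)+1)) * n := by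
              apply mul_le_mul_of_nonneg_right hnum (le_of_lt hn0)
          _ ≤ 6 * ((j:ℝ)+1) * (((n:ℝ)-1-j) * n) := by
              have hmul : 6*((j:ℝ)+1)*n * ((n:ℝ)/2) ≤ 6*((j:ℝ)+1)*n * ((n:ℝ)-1-j) :=
                mul_le_mul_of_nonneg_left hd.1 (by positivity)
              nlinarith [hmul]
      calc ∑ j ∈ range k, 2 * |a j - x| ≤ ∑ j ∈ range k, 12 * ((j:ℝ)+1) / n := by
            apply Finset.sum_le_sum
            intro j hj
            have hjk : j < m := by
              have := Finset.mem_range.1 hj; omega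
            have := hax j hjk
            calc 2 * |a j - x| ≤ 2 * (6 * ((j:ℝ)+1) / n) := by linarith
              _ = 12 * ((j:ℝ)+1) / n := by ring
        _ = 12 / n * (∑ j ∈ range k, ((j:ℝ)+1)) := by
            rw [Finset.mul_sum]
            apply Finset.sum_congr rfl
            intro j _; ring
        _ = 6*(k:ℝ)*(k+1)/n := by rw [hgauss k]; field_simp; ring
    linarith
  -- bound |T - P|
  have hTP : |(∑ k ∈ Finset.range (m + 1), (-1:ℝ)^k * (∏ j ∈ range k, a j) / (k.factorial : ℝ))
      - (∑ k ∈ Finset.range (m + 1), (-1:ℝ)^k * x^k / (k.factorial : ℝ))| ≤ 192 / n := by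
    rw [← Finset.sum_sub_distrib]
    calc |∑ k ∈ Finset.range (m+1), ((-1:ℝ)^k * (∏ j ∈ range k, a j) / (k.factorial : ℝ)
          - (-1:ℝ)^k * x^k / (k.factorial : ℝ))|
        ≤ ∑ k ∈ Finset.range (m+1), |(-1:ℝ)^k * (∏ j ∈ range k, a j) / (k.factorial : ℝ)
          - (-1:ℝ)^k * x^k / (k.factorial : ℝ)| := Finset.abs_sum_le_sum_abs _ _
      _ ≤ ∑ k ∈ Finset.range (m+1), 6*(k:ℝ)*(k+1)/((k.factorial : ℝ) * n) := by
          apply Finset.sum_le_sum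
          intro k hk
          have hkm : k ≤ m := by have := Finset.mem_range.1 hk; omega
          have hkf : (0:ℝ) < (k.factorial : ℝ) := by positivity
          have : (-1:ℝ)^k * (∏ j ∈ range k, a j) / (k.factorial : ℝ)
              - (-1:ℝ)^k * x^k / (k.factorial : ℝ)
              = (-1:ℝ)^k * ((∏ j ∈ range k, a j) - x^k) / (k.factorial : ℝ) := by ring
          rw [this, abs_div, abs_mul, abs_pow, abs_neg, abs_one, one_pow, one_mul,
            abs_of_pos hkf, div_le_div_iff₀ hkf (by positivity)]
          calc |(∏ j ∈ range k, a j) - x^k| * ((k.factorial:ℝ) * n)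
              = (|(∏ j ∈ range k, a j) - x^k| * n) * (k.factorial:ℝ) := by ring
            _ ≤ (6*(k:ℝ)*(k+1)/n * n) * (k.factorial:ℝ) := by
                apply mul_le_mul_of_nonneg_right _ (le_of_lt hkf)
                apply mul_le_mul_of_nonneg_right (hdiff k hkm) (le_of_lt hn0)
            _ = 6*(k:ℝ)*(k+1) * (k.factorial:ℝ) := by field_simp
      _ = (6/n) * ∑ k ∈ Finset.range (m+1), ((k:ℝ)*(k+1))/(k.factorial : ℝ) := by
          rw [Finset.mul_sum]
          apply Finset.sum_congr rfl
          intro k hk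
          have hkf : (0:ℝ) < (k.factorial : ℝ) := by positivity
          field_simp
      _ ≤ (6/n) * 32 := by
          apply mul_le_mul_of_nonneg_left (sum_kk_fact m) (by positivity)
      _ = 192 / n := by ring
  -- bound |P - exp(-x)|
  have hPE : |(∑ k ∈ Finset.range (m + 1), (-1:ℝ)^k * x^k / (k.factorial : ℝ)) - Real.exp (-x)|
      ≤ 4 / n := by
    have habs : |(-x)| ≤ 1 := by rw [abs_neg, abs_of_nonneg hx0]; exact hx1
    have hexp := Real.exp_bound habs (show 0 < m + 1 by omega)
    have hre : ∑ i ∈ Finset.range (m+1), (-x)^i / (i.factorial : ℝ)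
        = ∑ k ∈ Finset.range (m + 1), (-1:ℝ)^k * x^k / (k.factorial : ℝ) := by
      apply Finset.sum_congr rfl
      intro k _
      rw [neg_pow]
    rw [hre] at hexp
    rw [abs_sub_comm]
    calc |Real.exp (-x) - ∑ k ∈ Finset.range (m + 1), (-1:ℝ)^k * x^k / (k.factorial : ℝ)|
        ≤ |(-x)| ^ (m+1) * (((m+1) + 1 : ℕ) / ((((m+1).factorial : ℕ)) * (m+1) : ℝ)) := by
          exact_mod_cast hexp
      _ ≤ 4 / n := by
          rw [abs_neg, abs_of_nonneg hx0]
          have hxp : x ^ (m+1) ≤ x := pow_le_of_le_one hx0 hx1 (by omega)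
          have hfge : ((m+1:ℕ) : ℝ) ≤ ((m+1).factorial : ℝ) := by
            exact_mod_cast Nat.self_le_factorial (m+1)
          have hm1 : (0:ℝ) < ((m:ℝ)+1) := by positivity
          have hub : (((m+1) + 1 : ℕ) : ℝ) / ((((m+1).factorial : ℕ)) * (m+1) : ℝ)
              ≤ 2 / ((m:ℝ)+1) := by
            rw [div_le_div_iff₀ (by positivity) hm1]
            push_cast
            have hfge' : ((m:ℝ)+1) ≤ ((m+1).factorial : ℝ) := by push_cast at hfge; linarith
            have hF1 : (1:ℝ) ≤ ((m+1).factorial : ℝ) := by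
              exact_mod_cast Nat.one_le_iff_ne_zero.2 (Nat.factorial_ne_zero (m+1))
            nlinarith [mul_le_mul_of_nonneg_right hfge' (le_of_lt hm1),
              mul_le_mul_of_nonneg_left hF1 (le_of_lt hm1)]
          calc x ^ (m+1) * (((m+1) + 1 : ℕ) / ((((m+1).factorial : ℕ)) * (m+1) : ℝ))
              ≤ x * (2 / ((m:ℝ)+1)) := by
                apply mul_le_mul hxp hub (by positivity) hx0
            _ = 4 * m / (n * ((m:ℝ)+1)) := by rw [hxdef]; field_simp; ring
            _ ≤ 4 / n := by
                rw [div_le_div_iff₀ (by positivity) hn0]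
                nlinarith [mul_nonneg (le_of_lt hn0) hm0, hn0]
  -- bound |exp(-x) - exp(-1)|
  have hEE : |Real.exp (-x) - Real.exp (-1)| ≤ (f:ℝ)/n := by
    have hu : -x = -1 + (f:ℝ)/n := by
      have h2m : (2*(m:ℝ)) = (n:ℝ) - f := by linarith
      rw [hxdef, h2m]
      field_simp
      ring
    have hu0 : (0:ℝ) ≤ (f:ℝ)/n := by positivity
    have hu1 : (f:ℝ)/n ≤ 1 := by
      rw [div_le_one hn0]; linarith
    rw [hu, Real.exp_add]
    have hpos : 0 < Real.exp (-1) := Real.exp_pos _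
    have h1 : Real.exp (-1) * Real.exp ((f:ℝ)/n) - Real.exp (-1)
        = Real.exp (-1) * (Real.exp ((f:ℝ)/n) - 1) := by ring
    rw [h1, abs_of_nonneg (by nlinarith [Real.one_le_exp hu0])]
    have h2 := exp_sub_one_le ((f:ℝ)/n) hu0 hu1
    have h3 : Real.exp (-1) * Real.exp 1 = 1 := by
      rw [← Real.exp_add]; simp
    nlinarith [hpos, h2]
  -- combine
  set P := ∑ k ∈ Finset.range (m + 1), (-1:ℝ)^k * x^k / (k.factorial : ℝ)
  set Tm := ∑ k ∈ Finset.range (m + 1), (-1:ℝ)^k * (∏ j ∈ range k, a j) / (k.factorial : ℝ)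
  calc |Tm - Real.exp (-1)|
      = |(Tm - P) + (P - Real.exp (-x)) + (Real.exp (-x) - Real.exp (-1))| := by ring_nf
    _ ≤ |Tm - P| + |P - Real.exp (-x)| + |Real.exp (-x) - Real.exp (-1)| := by
        apply (abs_add_le _ _).trans
        apply add_le_add_left (abs_add_le _ _)
    _ ≤ 192/n + 4/n + (f:ℝ)/n := by
        apply add_le_add (add_le_add hTP hPE) hEE
    _ = 196 / n + (f : ℝ) / n := by ring


end RealLemmas

section Group
variable {G : Type*} [Fintype G] [DecidableEq G]
variable [AddCommGroup G]

/-- bad count formula by inclusion-exclusion -/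
lemma badcount (hn : 4 ≤ Fintype.card G) (s : G) :
    ∃ m : ℕ, (univ.filter fun g : G => ¬ (g + g = s)).card = 2 * m ∧
    2 * m + (univ.filter fun g : G => g + g = s).card = Fintype.card G ∧
    ((univ.filter fun σ : Perm G =>
        (σ.IsCycle ∧ σ.support = Finset.univ) ∧ ∀ g : G, g + σ g ≠ s).card : ℝ)
      = ∑ k ∈ Finset.range (m + 1),
          (-1 : ℝ) ^ k * (m.choose k) * 2 ^ k * ((Fintype.card G - 1 - k).factorial : ℝ) := by
  set n := Fintype.card G with hndef
  set ι : G → G := fun g => s - g with hι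
  set N : Finset G := univ.filter (fun g : G => ¬ (g + g = s)) with hN
  have hmemN : ∀ g, g ∈ N ↔ ¬ (g + g = s) := by
    intro g; simp [hN]
  have hιfix : ∀ g : G, (ι g = g ↔ g + g = s) := by
    intro g
    rw [show ι g = s - g from rfl, sub_eq_iff_eq_add, eq_comm]
  obtain ⟨m, hm, hcount⟩ := card_adm N.card N ι rfl
    (fun x hx => by
      rw [hmemN] at hx ⊢
      intro hc
      apply hx
      have h2 : s - x + (s - x) = s := hc
      have h3 : x + x - s = -(s - x + (s - x) - s) := by abel
      rw [h2, sub_self, neg_zero] at h3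
      exact sub_eq_zero.1 h3)
    (fun x _ => by rw [hι]; simp)
    (fun x hx => by rw [hmemN] at hx; rw [Ne, hιfix]; exact hx)
  refine ⟨m, hm, ?_, ?_⟩
  · have htot := Finset.card_filter_add_card_filter_not (s := (univ : Finset G))
      (p := fun g : G => g + g = s)
    rw [Finset.card_univ] at htot
    have hNeq : (univ.filter fun g : G => ¬(g + g = s)).card = 2 * m := hm
    omega
  -- the main formula
  · have hNn : N.card ≤ n := by
      calc N.card ≤ (univ : Finset G).card := Finset.card_le_card (Finset.subset_univ N)
        _ = n := Finset.card_univ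
    have hmn : m + 2 ≤ n := by omega
    -- admissible predicate
    set Adm : Finset G → Prop := fun A => A ⊆ N ∧ ∀ a ∈ A, ι a ∉ A with hAdm
    have hadm_card : ∀ A : Finset G, Adm A → A.card ≤ m := by
      intro A hA
      by_contra hgt
      have hpos : 0 < (univ.filter (fun A' : Finset G =>
          A' ⊆ N ∧ (∀ a ∈ A', ι a ∉ A') ∧ A'.card = A.card)).card :=
        Finset.card_pos.2 ⟨A, Finset.mem_filter.2 ⟨Finset.mem_univ _, hA.1, hA.2, rfl⟩⟩
      rw [hcount A.card] at hpos
      rw [Nat.choose_eq_zero_of_lt (by omega)] at hpos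
      simp at hpos
    -- count with arcs
    have harc : ∀ A : Finset G, Adm A →
        (univ.filter fun σ : Perm G =>
          (σ.IsCycle ∧ σ.support = Finset.univ) ∧ ∀ a ∈ A, σ a = ι a).card
        = (n - 1 - A.card).factorial := by
      intro A hA
      have := card_cycles_arcs A.card A Finset.univ ι rfl (Finset.subset_univ _)
        (fun a _ => Finset.mem_univ _)
        hA.2
        (fun u _ v _ huv => by
          simpa [hι, sub_right_injective.eq_iff] using huv)
        (by rw [Finset.card_univ, ← hndef]; have := hadm_card A hA; omega)
      rw [Finset.card_univ, ← hndef] at this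
      rw [← this]
      apply congrArg
      apply Finset.filter_congr
      intro σ _
      rw [and_assoc]
    have harc0 : ∀ A : Finset G, ¬ Adm A →
        (univ.filter fun σ : Perm G =>
          (σ.IsCycle ∧ σ.support = Finset.univ) ∧ ∀ a ∈ A, σ a = ι a).card = 0 := by
      intro A hA
      rw [Finset.card_eq_zero, Finset.filter_eq_empty_iff]
      rintro σ _ ⟨⟨hc, hs⟩, harcs⟩
      have hsupp : ∀ g : G, σ g ≠ g := by
        intro g
        exact Equiv.Perm.mem_support.1 (by rw [hs]; exact Finset.mem_univ g)
      rw [hAdm, not_and_or] at hA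
      rcases hA with hA | hA
      · rw [Finset.not_subset] at hA
        obtain ⟨a, haA, haN⟩ := hA
        rw [hmemN, not_not] at haN
        exact hsupp a (by rw [harcs a haA, (hιfix a).2 haN])
      · push_neg at hA
        obtain ⟨a, haA, hιaA⟩ := hA
        have h1 : σ a = ι a := harcs a haA
        have h2 : σ (ι a) = ι (ι a) := harcs (ι a) hιaA
        have hιι : ι (ι a) = a := by rw [hι]; simp
        have hfix2 : σ (σ a) = a := by rw [h1, h2, hιι]
        have := hc.eq_swap_of_apply_apply_eq_self (hsupp a) hfix2
        have hsupp2 := congrArg Equiv.Perm.support this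
        rw [hs, Equiv.Perm.support_swap (hsupp a).symm] at hsupp2
        have hcard2 := congrArg Finset.card hsupp2
        rw [Finset.card_univ, ← hndef, Finset.card_insert_of_notMem
          (by simp only [Finset.mem_singleton]; exact fun h => (hsupp a) h.symm),
          Finset.card_singleton] at hcard2
        omega
    -- step 1: bad count as a sum over ham cycles
    have step1 : ((univ.filter fun σ : Perm G =>
        (σ.IsCycle ∧ σ.support = Finset.univ) ∧ ∀ g : G, g + σ g ≠ s).card : ℝ)
        = ∑ σ ∈ univ.filter (fun σ : Perm G => σ.IsCycle ∧ σ.support = Finset.univ),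
            (if ∀ g : G, g + σ g ≠ s then (1 : ℝ) else 0) := by
      rw [← Finset.filter_filter, Finset.card_filter]
      push_cast
      apply Finset.sum_congr rfl
      intro σ _
      split <;> simp
    rw [step1]
    -- step 2: inclusion-exclusion per sigma
    have step2 : ∀ σ : Perm G, (if ∀ g : G, g + σ g ≠ s then (1 : ℝ) else 0)
        = ∑ A ∈ (univ : Finset (Finset G)),
            (if ∀ a ∈ A, σ a = ι a then ((-1 : ℝ) ^ A.card) else 0) := by
      intro σ
      set V : Finset G := univ.filter (fun g : G => σ g = ι g) with hV
      have hVsub : ∀ A : Finset G, (A ⊆ V ↔ ∀ a ∈ A, σ a = ι a) := by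
        intro A
        constructor
        · intro h a ha
          have := h ha
          rw [hV, Finset.mem_filter] at this
          exact this.2
        · intro h a ha
          rw [hV, Finset.mem_filter]
          exact ⟨Finset.mem_univ _, h a ha⟩
      have hVempty : (V = ∅) ↔ ∀ g : G, g + σ g ≠ s := by
        rw [hV, Finset.filter_eq_empty_iff]
        constructor
        · intro h g hc
          exact h (Finset.mem_univ g) (by rw [hι, eq_sub_iff_add_eq, add_comm]; exact hc)
        · intro h g _ hc
          rw [hι, eq_sub_iff_add_eq, add_comm] at hc
          exact h g hc
      have hpowZ : (∑ A ∈ V.powerset, (-1 : ℤ) ^ A.card) = if V = ∅ then 1 else 0 :=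
        Finset.sum_powerset_neg_one_pow_card
      have hpow : (∑ A ∈ V.powerset, (-1 : ℝ) ^ A.card) = if V = ∅ then 1 else 0 := by
        have hc2 := congrArg (fun z : ℤ => (z : ℝ)) hpowZ
        push_cast at hc2
        simpa [apply_ite (fun z : ℤ => (z : ℝ))] using hc2
      have hrw : ∑ A ∈ V.powerset, (-1 : ℝ) ^ A.card
          = ∑ A ∈ (univ : Finset (Finset G)), (if ∀ a ∈ A, σ a = ι a then ((-1 : ℝ) ^ A.card) else 0) := by
        rw [← Finset.sum_filter]
        apply Finset.sum_congr
        · ext A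
          simp only [Finset.mem_powerset, Finset.mem_filter, Finset.mem_univ, true_and]
          exact hVsub A
        · intro _ _; rfl
      refine Eq.trans ?_ hrw
      rw [hpow]
      by_cases hP : ∀ g : G, g + σ g ≠ s
      · rw [if_pos hP, if_pos (hVempty.2 hP)]
      · rw [if_neg hP, if_neg (fun h => hP (hVempty.1 h))]
    rw [Finset.sum_congr rfl (fun σ _ => step2 σ)]
    -- step 3: swap sums
    rw [Finset.sum_comm]
    have step3 : ∀ A : Finset G,
        (∑ σ ∈ univ.filter (fun σ : Perm G => σ.IsCycle ∧ σ.support = Finset.univ),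
          (if ∀ a ∈ A, σ a = ι a then ((-1 : ℝ) ^ A.card) else 0))
        = (-1 : ℝ) ^ A.card * ((univ.filter fun σ : Perm G =>
            (σ.IsCycle ∧ σ.support = Finset.univ) ∧ ∀ a ∈ A, σ a = ι a).card : ℝ) := by
      intro A
      rw [← Finset.sum_filter, Finset.filter_filter, Finset.sum_const, nsmul_eq_mul, mul_comm]
    rw [Finset.sum_congr rfl (fun A _ => step3 A)]
    -- step 4 : split off non-admissible A, which contribute 0
    have step4 : ∀ A : Finset G, (-1 : ℝ) ^ A.card * ((univ.filter fun σ : Perm G =>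
            (σ.IsCycle ∧ σ.support = Finset.univ) ∧ ∀ a ∈ A, σ a = ι a).card : ℝ)
          = if Adm A then (-1 : ℝ) ^ A.card * ((n - 1 - A.card).factorial : ℝ) else 0 := by
      intro A
      by_cases hA : Adm A
      · rw [if_pos hA, harc A hA]
      · rw [if_neg hA, harc0 A hA]; simp
    rw [Finset.sum_congr rfl (fun A _ => step4 A)]
    rw [← Finset.sum_filter]
    -- step 5: fiberwise by cardinality
    rw [← Finset.sum_fiberwise_of_maps_to (g := fun A : Finset G => A.card)
      (t := Finset.range (m + 1))
      (fun A hA => by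
        have h := hadm_card A (Finset.mem_filter.1 hA).2
        simp only [Finset.mem_range]
        omega)]
    apply Finset.sum_congr rfl
    intro k hk
    have hconst : ∀ A ∈ (univ.filter Adm).filter (fun A : Finset G => A.card = k),
        (-1 : ℝ) ^ A.card * ((n - 1 - A.card).factorial : ℝ)
          = (-1 : ℝ) ^ k * ((n - 1 - k).factorial : ℝ) := by
      intro A hA
      rw [(Finset.mem_filter.1 hA).2]
    rw [Finset.sum_congr rfl hconst, Finset.sum_const, nsmul_eq_mul]
    have hseteq : (univ.filter Adm).filter (fun A : Finset G => A.card = k)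
        = univ.filter (fun A : Finset G => A ⊆ N ∧ (∀ a ∈ A, ι a ∉ A) ∧ A.card = k) := by
      rw [Finset.filter_filter]
      apply Finset.filter_congr
      intro A _
      rw [hAdm, and_assoc]
    rw [hseteq, hcount k]
    push_cast
    ring

lemma sumswap :
    (∑ σ ∈ univ.filter (fun σ : Perm G => σ.IsCycle ∧ σ.support = Finset.univ),
        ((_root_.cycleSums σ).card : ℝ))
      = ∑ s : G,
          (((univ.filter (fun σ : Perm G => σ.IsCycle ∧ σ.support = Finset.univ)).card : ℝ)
            - ((univ.filter fun σ : Perm G =>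
                (σ.IsCycle ∧ σ.support = Finset.univ) ∧ ∀ g : G, g + σ g ≠ s).card : ℝ)) := by
  set ham := univ.filter (fun σ : Perm G => σ.IsCycle ∧ σ.support = Finset.univ) with hham
  have hcard : ∀ σ : Perm G, ((_root_.cycleSums σ).card : ℝ)
      = ∑ s : G, (if s ∈ _root_.cycleSums σ then (1 : ℝ) else 0) := by
    intro σ
    rw [← Finset.sum_filter]
    rw [Finset.sum_const, nsmul_eq_mul, mul_one]
    congr 1
    rw [Finset.filter_mem_eq_inter, Finset.univ_inter]
  rw [Finset.sum_congr rfl (fun σ _ => hcard σ), Finset.sum_comm]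
  apply Finset.sum_congr rfl
  intro s _
  have hsplit := Finset.card_filter_add_card_filter_not (s := ham)
    (p := fun σ : Perm G => ∀ g : G, g + σ g ≠ s)
  have h1 : (ham.filter (fun σ : Perm G => ¬ ∀ g : G, g + σ g ≠ s))
      = ham.filter (fun σ : Perm G => s ∈ _root_.cycleSums σ) := by
    apply Finset.filter_congr
    intro σ _
    push_neg
    constructor
    · rintro ⟨g, hg⟩
      exact Finset.mem_image.2 ⟨g, Finset.mem_univ g, hg⟩
    · intro h
      obtain ⟨g, _, hg⟩ := Finset.mem_image.1 h
      exact ⟨g, hg⟩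
  have h2 : (ham.filter (fun σ : Perm G => ∀ g : G, g + σ g ≠ s))
      = univ.filter (fun σ : Perm G =>
          (σ.IsCycle ∧ σ.support = Finset.univ) ∧ ∀ g : G, g + σ g ≠ s) := by
    rw [hham, Finset.filter_filter]
  rw [← Finset.sum_filter, Finset.sum_const, nsmul_eq_mul, mul_one, ← h1]
  rw [← h2] at *
  have := hsplit
  push_cast [← this]
  ring

end Group

end Stmt19Aux

open scoped Classical in
theorem stmt19 : ∃ c : ℝ, 0 < c ∧
    ∀ (G : Type) [AddCommGroup G] [Fintype G] [DecidableEq G], 2 ≤ Fintype.card G →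
      |(∑ σ ∈ Finset.univ.filter (fun σ : Equiv.Perm G => IsHamCycle σ),
            ((cycleSums σ).card : ℝ)) / (Nat.factorial (Fintype.card G - 1)) -
          (1 - Real.exp (-1)) * Fintype.card G| ≤ c := by
  classical
  refine ⟨200, by norm_num, ?_⟩
  intro G _ _ _ hcard
  open Finset Equiv Equiv.Perm Stmt19Aux in
  have hfilter : (Finset.univ.filter (fun σ : Equiv.Perm G => IsHamCycle σ))
      = (Finset.univ.filter (fun σ : Equiv.Perm G =>
          σ.IsCycle ∧ σ.support = Finset.univ)) := by
    apply Finset.filter_congr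
    intro σ _
    exact Iff.rfl
  have hucard : (Finset.univ : Finset G).card = Fintype.card G := Finset.card_univ
  have hH : (Finset.univ.filter (fun σ : Equiv.Perm G =>
      σ.IsCycle ∧ σ.support = Finset.univ)).card = (Fintype.card G - 1).factorial := by
    have := Stmt19Aux.card_cycles_support (B := (Finset.univ : Finset G))
      (by rw [hucard]; omega)
    rwa [hucard] at this
  have hF0 : (0:ℝ) < ((Fintype.card G - 1).factorial : ℝ) := by positivity
  have hn0 : (0:ℝ) < (Fintype.card G : ℝ) := by
    exact_mod_cast (show 0 < Fintype.card G by omega)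
  rw [hfilter]
  by_cases hn4 : 4 ≤ Fintype.card G
  · -- main case
    have hper : ∀ s : G,
        |((Finset.univ.filter fun σ : Equiv.Perm G =>
            (σ.IsCycle ∧ σ.support = Finset.univ) ∧ ∀ g : G, g + σ g ≠ s).card : ℝ)
              / ((Fintype.card G - 1).factorial : ℝ) - Real.exp (-1)|
          ≤ 196 / (Fintype.card G : ℝ)
            + ((Finset.univ.filter fun g : G => g + g = s).card : ℝ) / (Fintype.card G : ℝ) := by
      intro s
      obtain ⟨m, _, hmfix, hform⟩ := Stmt19Aux.badcount hn4 s
      have hana := Stmt19Aux.analysis (Fintype.card G) m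
        ((Finset.univ.filter fun g : G => g + g = s).card) hn4 (by omega)
      rw [hform]
      exact hana
    have hsumfx : (∑ s : G, ((Finset.univ.filter fun g : G => g + g = s).card : ℝ))
        = (Fintype.card G : ℝ) := by
      have hfib := Finset.card_eq_sum_card_fiberwise
        (f := fun g : G => g + g) (s := Finset.univ) (t := Finset.univ)
        (fun x _ => Finset.mem_univ _)
      rw [hucard] at hfib
      exact_mod_cast (congrArg (Nat.cast : ℕ → ℝ) hfib).symm
    rw [Stmt19Aux.sumswap]
    have key : (∑ s : G,
          (((Finset.univ.filter (fun σ : Equiv.Perm G =>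
              σ.IsCycle ∧ σ.support = Finset.univ)).card : ℝ)
            - ((Finset.univ.filter fun σ : Equiv.Perm G =>
                (σ.IsCycle ∧ σ.support = Finset.univ) ∧ ∀ g : G, g + σ g ≠ s).card : ℝ)))
          / ((Fintype.card G - 1).factorial : ℝ)
          - (1 - Real.exp (-1)) * (Fintype.card G : ℝ)
        = ∑ s : G, (Real.exp (-1)
            - ((Finset.univ.filter fun σ : Equiv.Perm G =>
                (σ.IsCycle ∧ σ.support = Finset.univ) ∧ ∀ g : G, g + σ g ≠ s).card : ℝ)
              / ((Fintype.card G - 1).factorial : ℝ)) := by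
      rw [Finset.sum_div]
      have hconst : (1 - Real.exp (-1)) * (Fintype.card G : ℝ)
          = ∑ _s : G, (1 - Real.exp (-1)) := by
        rw [Finset.sum_const, hucard, nsmul_eq_mul]; ring
      rw [hconst, ← Finset.sum_sub_distrib]
      apply Finset.sum_congr rfl
      intro s _
      rw [hH]
      field_simp
      ring
    rw [key]
    calc |∑ s : G, (Real.exp (-1)
            - ((Finset.univ.filter fun σ : Equiv.Perm G =>
                (σ.IsCycle ∧ σ.support = Finset.univ) ∧ ∀ g : G, g + σ g ≠ s).card : ℝ)
              / ((Fintype.card G - 1).factorial : ℝ))|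
        ≤ ∑ s : G, |Real.exp (-1)
            - ((Finset.univ.filter fun σ : Equiv.Perm G =>
                (σ.IsCycle ∧ σ.support = Finset.univ) ∧ ∀ g : G, g + σ g ≠ s).card : ℝ)
              / ((Fintype.card G - 1).factorial : ℝ)| := Finset.abs_sum_le_sum_abs _ _
      _ ≤ ∑ s : G, (196 / (Fintype.card G : ℝ)
            + ((Finset.univ.filter fun g : G => g + g = s).card : ℝ) / (Fintype.card G : ℝ)) := by
          apply Finset.sum_le_sum
          intro s _
          rw [abs_sub_comm]
          exact hper s
      _ = 196 + 1 := by
          rw [Finset.sum_add_distrib, Finset.sum_const, hucard, nsmul_eq_mul,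
            ← Finset.sum_div, hsumfx]
          field_simp
      _ ≤ 200 := by norm_num
  · -- small case : Fintype.card G ≤ 3
    have hn3 : Fintype.card G ≤ 3 := by omega
    have hbound : (∑ σ ∈ Finset.univ.filter (fun σ : Equiv.Perm G =>
          σ.IsCycle ∧ σ.support = Finset.univ), ((cycleSums σ).card : ℝ))
        ≤ ((Fintype.card G - 1).factorial : ℝ) * (Fintype.card G : ℝ) := by
      calc (∑ σ ∈ Finset.univ.filter (fun σ : Equiv.Perm G =>
            σ.IsCycle ∧ σ.support = Finset.univ), ((cycleSums σ).card : ℝ))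
          ≤ ∑ _σ ∈ Finset.univ.filter (fun σ : Equiv.Perm G =>
            σ.IsCycle ∧ σ.support = Finset.univ), (Fintype.card G : ℝ) := by
            apply Finset.sum_le_sum
            intro σ _
            exact_mod_cast Finset.card_le_univ (cycleSums σ)
        _ = ((Fintype.card G - 1).factorial : ℝ) * (Fintype.card G : ℝ) := by
            rw [Finset.sum_const, hH, nsmul_eq_mul]
    have hpos : (0:ℝ) ≤ (∑ σ ∈ Finset.univ.filter (fun σ : Equiv.Perm G =>
          σ.IsCycle ∧ σ.support = Finset.univ), ((cycleSums σ).card : ℝ)) := by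
      apply Finset.sum_nonneg
      intro σ _
      positivity
    have hdivle : (∑ σ ∈ Finset.univ.filter (fun σ : Equiv.Perm G =>
          σ.IsCycle ∧ σ.support = Finset.univ), ((cycleSums σ).card : ℝ))
          / ((Fintype.card G - 1).factorial : ℝ) ≤ (Fintype.card G : ℝ) := by
      rw [div_le_iff₀ hF0]
      calc (∑ σ ∈ Finset.univ.filter (fun σ : Equiv.Perm G =>
            σ.IsCycle ∧ σ.support = Finset.univ), ((cycleSums σ).card : ℝ))
          ≤ ((Fintype.card G - 1).factorial : ℝ) * (Fintype.card G : ℝ) := hbound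
        _ = (Fintype.card G : ℝ) * ((Fintype.card G - 1).factorial : ℝ) := by ring
    have he1 : 0 < Real.exp (-1) := Real.exp_pos _
    have he2 : Real.exp (-1) < 1 := by
      calc Real.exp (-1) < Real.exp 0 := Real.exp_lt_exp.2 (by norm_num)
        _ = 1 := Real.exp_zero
    have hnr : (Fintype.card G : ℝ) ≤ 3 := by exact_mod_cast hn3
    rw [abs_le]
    constructor
    · have : (0:ℝ) ≤ (∑ σ ∈ Finset.univ.filter (fun σ : Equiv.Perm G =>
          σ.IsCycle ∧ σ.support = Finset.univ), ((cycleSums σ).card : ℝ))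
          / ((Fintype.card G - 1).factorial : ℝ) := by positivity
      nlinarith [hn0]
    · nlinarith [hn0, hdivle]
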